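/- arXiv:2512.04132 — 3 statements merged into one kernel-verified Lean document; each statement's English description precedes it below -/
import Mathlib

section
/- Let K, n1, n2 be natural numbers with n1 ≤ K and n2 ≤ K. Then the sum, over all functions φ : Fin 2 × Fin 2 → ℕ with φ(0,0)+φ(0,1)+φ(1,0)+φ(1,1) = K, φ(1,0)+φ(1,1) = n1, and φ(0,1)+φ(1,1) = n2, of the multinomial coefficient K! / (φ(0,0)! · φ(0,1)! · φ(1,0)! · φ(1,1)!) equals (K choose n1) · (K choose n2). -/
open Finset

lemma quad_multinomial (a b c d : ℕ) :
    (a + b + c + d).factorial /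
      (a.factorial * b.factorial * c.factorial * d.factorial)
    = (a + b + c + d).choose (c + d) * ((c + d).choose d * (a + b).choose b) := by
  have hcd : (c + d).choose d * d.factorial * c.factorial = (c + d).factorial := by
    rw [mul_right_comm]; exact Nat.add_choose_mul_factorial_mul_factorial c d
  have hab : (a + b).choose b * b.factorial * a.factorial = (a + b).factorial := by
    rw [mul_right_comm]; exact Nat.add_choose_mul_factorial_mul_factorial a b
  have hK : (a + b + c + d).choose (c + d) * (c + d).factorial * (a + b).factorial
      = (a + b + c + d).factorial := by
    rw [show a + b + c + d = a + b + (c + d) from by ring, mul_right_comm]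
    exact Nat.add_choose_mul_factorial_mul_factorial (a + b) (c + d)
  apply Nat.div_eq_of_eq_mul_left
  · positivity
  · calc (a + b + c + d).factorial
        = ((a + b + c + d).choose (c + d) * (c + d).factorial * (a + b).factorial) := hK.symm
      _ = (a + b + c + d).choose (c + d) *
            ((c + d).choose d * d.factorial * c.factorial) *
            ((a + b).choose b * b.factorial * a.factorial) := by rw [hcd, hab]
      _ = (a + b + c + d).choose (c + d) * ((c + d).choose d * (a + b).choose b) *
            (a.factorial * b.factorial * c.factorial * d.factorial) := by ring

theorem marginal_heads_coefficient (K n1 n2 : ℕ) (h1 : n1 ≤ K) (h2 : n2 ≤ K) :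
    ∑ φ ∈ (Fintype.piFinset fun _ : Fin 2 × Fin 2 => Finset.range (K + 1)).filter
        (fun φ => φ (0,0) + φ (0,1) + φ (1,0) + φ (1,1) = K ∧
          φ (1,0) + φ (1,1) = n1 ∧ φ (0,1) + φ (1,1) = n2),
      K.factorial /
        ((φ (0,0)).factorial * (φ (0,1)).factorial * (φ (1,0)).factorial * (φ (1,1)).factorial)
      = K.choose n1 * K.choose n2 := by
  classical
  set S := (Finset.range (n2+1)).filter (fun j => j ≤ n1 ∧ n1 + n2 ≤ K + j) with hS
  set g : ℕ → (Fin 2 × Fin 2 → ℕ) := fun j p =>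
    ![![K + j - (n1 + n2), n2 - j], ![n1 - j, j]] p.1 p.2 with hg
  have hg00 : ∀ j, g j (0,0) = K + j - (n1 + n2) := by intro j; simp [hg]
  have hg01 : ∀ j, g j (0,1) = n2 - j := by intro j; simp [hg]
  have hg10 : ∀ j, g j (1,0) = n1 - j := by intro j; simp [hg]
  have hg11 : ∀ j, g j (1,1) = j := by intro j; simp [hg]
  have step1 :
      ∑ φ ∈ (Fintype.piFinset fun _ : Fin 2 × Fin 2 => Finset.range (K + 1)).filter
        (fun φ => φ (0,0) + φ (0,1) + φ (1,0) + φ (1,1) = K ∧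
          φ (1,0) + φ (1,1) = n1 ∧ φ (0,1) + φ (1,1) = n2),
      K.factorial /
        ((φ (0,0)).factorial * (φ (0,1)).factorial * (φ (1,0)).factorial * (φ (1,1)).factorial)
      = ∑ j ∈ S, K.factorial /
          ((K + j - (n1 + n2)).factorial * (n2 - j).factorial * (n1 - j).factorial *
            j.factorial) := by
    apply Finset.sum_nbij' (i := fun φ => φ (1,1)) (j := g)
    · intro φ hφ
      simp only [Finset.mem_filter, Fintype.mem_piFinset, Finset.mem_range] at hφ
      obtain ⟨_, e1, e2, e3⟩ := hφ
      simp only [hS, Finset.mem_filter, Finset.mem_range]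
      exact ⟨by omega, by omega, by omega⟩
    · intro j hj
      simp only [hS, Finset.mem_filter, Finset.mem_range] at hj
      simp only [Finset.mem_filter, Fintype.mem_piFinset, Finset.mem_range]
      refine ⟨fun p => ?_, ?_, ?_, ?_⟩
      · fin_cases p <;>
          simp only [Fin.zero_eta, Fin.mk_one, hg00, hg01, hg10, hg11] <;> omega
      · rw [hg00, hg01, hg10, hg11]; omega
      · rw [hg10, hg11]; omega
      · rw [hg01, hg11]; omega
    · intro φ hφ
      simp only [Finset.mem_filter, Fintype.mem_piFinset, Finset.mem_range] at hφ
      obtain ⟨_, e1, e2, e3⟩ := hφ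
      funext p
      fin_cases p <;>
        simp only [Fin.zero_eta, Fin.mk_one, hg00, hg01, hg10, hg11] <;> omega
    · intro j hj
      exact hg11 j
    · intro φ hφ
      simp only [Finset.mem_filter, Fintype.mem_piFinset, Finset.mem_range] at hφ
      obtain ⟨_, e1, e2, e3⟩ := hφ
      have ha : φ (0,0) = K + φ (1,1) - (n1 + n2) := by omega
      have hb : φ (0,1) = n2 - φ (1,1) := by omega
      have hc : φ (1,0) = n1 - φ (1,1) := by omega
      rw [ha, hb, hc]
  rw [step1]
  clear step1 hg00 hg01 hg10 hg11
  clear_value g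
  clear hg g
  have step2 : ∀ j ∈ S,
      K.factorial / ((K + j - (n1 + n2)).factorial * (n2 - j).factorial *
        (n1 - j).factorial * j.factorial)
      = K.choose n1 * (n1.choose j * (K - n1).choose (n2 - j)) := by
    intro j hj
    simp only [hS, Finset.mem_filter, Finset.mem_range] at hj
    obtain ⟨hj2, hj1, hjk⟩ := hj
    have key := quad_multinomial (K + j - (n1 + n2)) (n2 - j) (n1 - j) j
    have hsum : K + j - (n1 + n2) + (n2 - j) + (n1 - j) + j = K := by omega
    have hn1 : n1 - j + j = n1 := by omega
    have hab : K + j - (n1 + n2) + (n2 - j) = K - n1 := by omega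
    rw [hsum, hn1, hab] at key
    rw [key]
  rw [Finset.sum_congr rfl step2]
  have vdm : K.choose n2
      = ∑ j ∈ Finset.range (n2 + 1), n1.choose j * (K - n1).choose (n2 - j) := by
    have h := Nat.add_choose_eq n1 (K - n1) n2
    rw [Nat.add_sub_cancel' h1] at h
    rw [h, Finset.Nat.sum_antidiagonal_eq_sum_range_succ_mk]
  have hfull : ∑ j ∈ S, K.choose n1 * (n1.choose j * (K - n1).choose (n2 - j))
      = ∑ j ∈ Finset.range (n2 + 1),
          K.choose n1 * (n1.choose j * (K - n1).choose (n2 - j)) := by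
    rw [hS]
    apply Finset.sum_filter_of_ne
    intro j hj hne
    simp only [Finset.mem_range] at hj
    constructor
    · by_contra h
      push_neg at h
      rw [Nat.choose_eq_zero_of_lt h] at hne
      simp at hne
    · by_contra h
      push_neg at h
      have : K - n1 < n2 - j := by omega
      rw [Nat.choose_eq_zero_of_lt this] at hne
      simp at hne
  rw [hfull, ← Finset.mul_sum, ← vdm]
end

section
/- Multinomial distributions are closed under convolution: for a probability distribution ω on a finite type X and natural numbers K, L, the convolution (with respect to multiset addition) of Multinomial(K,ω) and Multinomial(L,ω) equals Multinomial(K+L,ω); i.e., for every multiset χ of size K+L, Σ_{φ+ψ=χ, |φ|=K, |ψ|=L} Multinomial(K,ω)(φ)·Multinomial(L,ω)(ψ) = Multinomial(K+L,ω)(χ). -/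
open Finset

namespace MnlAux

variable {X : Type*} [Fintype X] [DecidableEq X]

lemma sum_count (m : Multiset X) : ∑ x : X, m.count x = Multiset.card m := by
  rw [← Multiset.toFinset_sum_count_eq]
  exact (Finset.sum_subset (Finset.subset_univ _) fun x _ hx =>
    Multiset.count_eq_zero.2 fun h => hx (Multiset.mem_toFinset.2 h)).symm

lemma count_powersetCard (m φ : Multiset X) :
    (Multiset.powersetCard (Multiset.card φ) m).count φ
      = ∏ x : X, (m.count x).choose (φ.count x) := by
  induction m using Multiset.induction generalizing φ with
  | empty =>
    by_cases hφ : φ = 0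
    · subst hφ; simp [Multiset.powersetCard_zero_left]
    · obtain ⟨a, ha⟩ := Multiset.exists_mem_of_ne_zero hφ
      obtain ⟨n, hn⟩ : ∃ n, Multiset.card φ = n + 1 := by
        have : Multiset.card φ ≠ 0 := fun h => hφ (Multiset.card_eq_zero.1 h)
        exact ⟨Multiset.card φ - 1, by omega⟩
      rw [hn, Multiset.powersetCard_zero_right, Multiset.count_zero]
      refine (Finset.prod_eq_zero (Finset.mem_univ a) ?_).symm
      rw [Multiset.count_zero]
      exact Nat.choose_eq_zero_of_lt (Multiset.count_pos.2 ha)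
  | cons a s ih =>
    by_cases hφ : φ = 0
    · subst hφ; simp [Multiset.powersetCard_zero_left]
    · obtain ⟨n, hn⟩ : ∃ n, Multiset.card φ = n + 1 := by
        have : Multiset.card φ ≠ 0 := fun h => hφ (Multiset.card_eq_zero.1 h)
        exact ⟨Multiset.card φ - 1, by omega⟩
      rw [hn, Multiset.powersetCard_cons, Multiset.count_add]
      have h1 : (Multiset.powersetCard (n + 1) s).count φ
          = ∏ x : X, (s.count x).choose (φ.count x) := by
        rw [← hn]; exact ih φ
      by_cases ha : a ∈ φ
      · -- second summand
        have hφa : a ::ₘ φ.erase a = φ := Multiset.cons_erase ha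
        have hcard : Multiset.card (φ.erase a) = n := by
          rw [Multiset.card_erase_of_mem ha, hn]; rfl
        have hinj : Function.Injective (Multiset.cons a) :=
          fun s t h => (Multiset.cons_inj_right a).1 h
        have h2 : ((Multiset.powersetCard n s).map (Multiset.cons a)).count φ
            = ∏ x : X, (s.count x).choose ((φ.erase a).count x) := by
          conv_lhs => rw [← hφa]
          rw [Multiset.count_map_eq_count' _ _ hinj, ← hcard, ih (φ.erase a)]
        rw [h1, h2]
        -- now compute the RHS
        obtain ⟨k, hk⟩ : ∃ k, φ.count a = k + 1 := by
          have := Multiset.count_pos.2 ha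
          exact ⟨φ.count a - 1, by omega⟩
        have herase : (φ.erase a).count a = k := by
          rw [Multiset.count_erase_self, hk]
          omega
        have hR : ∀ t : Multiset X,
            ∏ x : X, (t.count x).choose (φ.count x)
              = (t.count a).choose (φ.count a) *
                ∏ x ∈ Finset.univ.erase a, (t.count x).choose (φ.count x) :=
          fun t => (Finset.mul_prod_erase _ _ (Finset.mem_univ a)).symm
        have hR' :
            ∏ x : X, (s.count x).choose ((φ.erase a).count x)
              = (s.count a).choose k *
                ∏ x ∈ Finset.univ.erase a, (s.count x).choose (φ.count x) := by
          rw [← Finset.mul_prod_erase _ _ (Finset.mem_univ a), herase]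
          congr 1
          refine Finset.prod_congr rfl fun x hx => ?_
          rw [Multiset.count_erase_of_ne (Finset.ne_of_mem_erase hx)]
        have hcnt : ∀ x : X, (a ::ₘ s).count x = if x = a then s.count a + 1 else s.count x := by
          intro x
          by_cases hx : x = a
          · subst hx; simp [Multiset.count_cons_self]
          · simp [Multiset.count_cons_of_ne hx, if_neg hx]
        rw [hR s, hR (a ::ₘ s), hR']
        have hprodeq : ∏ x ∈ Finset.univ.erase a, ((a ::ₘ s).count x).choose (φ.count x)
            = ∏ x ∈ Finset.univ.erase a, (s.count x).choose (φ.count x) :=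
          Finset.prod_congr rfl fun x hx => by
            rw [hcnt x, if_neg (Finset.ne_of_mem_erase hx)]
        rw [hprodeq, hcnt a, if_pos rfl, hk, Nat.choose_succ_succ']
        ring
      · -- a ∉ φ : second summand is zero
        have h2 : ((Multiset.powersetCard n s).map (Multiset.cons a)).count φ = 0 := by
          rw [Multiset.count_eq_zero]
          rintro hmem
          obtain ⟨b, _, hb⟩ := Multiset.mem_map.1 hmem
          exact ha (hb ▸ Multiset.mem_cons_self a b)
        rw [h1, h2, Nat.add_zero]
        refine Finset.prod_congr rfl fun x _ => ?_
        by_cases hx : x = a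
        · subst hx
          rw [Multiset.count_eq_zero_of_notMem ha, Nat.choose_zero_right,
            Nat.choose_zero_right]
        · rw [Multiset.count_cons_of_ne hx]

lemma vandermonde (χ : Multiset X) (K : ℕ) :
    ∑ φ ∈ (Multiset.powersetCard K χ).toFinset,
        ∏ x : X, (χ.count x).choose (φ.count x)
      = (Multiset.card χ).choose K := by
  rw [← Multiset.card_powersetCard, ← Multiset.toFinset_sum_count_eq]
  refine Finset.sum_congr rfl fun φ hφ => ?_
  obtain ⟨hle, hcard⟩ := Multiset.mem_powersetCard.1 (Multiset.mem_toFinset.1 hφ)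
  subst hcard
  exact (count_powersetCard χ φ).symm

lemma nat_main (K L : ℕ) (χ : Sym X (K + L)) :
    ∑ p ∈ Finset.univ.filter
        (fun p : Sym X K × Sym X L =>
          (p.1 : Multiset X) + (p.2 : Multiset X) = (χ : Multiset X)),
      Nat.multinomial Finset.univ (fun x => Multiset.count x (p.1 : Multiset X))
        * Nat.multinomial Finset.univ (fun x => Multiset.count x (p.2 : Multiset X))
      = Nat.multinomial Finset.univ (fun x => Multiset.count x (χ : Multiset X)) := by
  have hD : 0 < ∏ x : X, Nat.factorial (Multiset.count x (χ : Multiset X)) :=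
    Finset.prod_pos fun _ _ => Nat.factorial_pos _
  refine Nat.eq_of_mul_eq_mul_left hD ?_
  have hspec : ∀ (n : ℕ) (φ : Sym X n),
      (∏ x : X, Nat.factorial (Multiset.count x (φ : Multiset X))) *
        Nat.multinomial Finset.univ (fun x => Multiset.count x (φ : Multiset X)) = Nat.factorial n := by
    intro n φ
    rw [Nat.multinomial_spec]
    congr 1
    rw [sum_count (φ : Multiset X)]
    exact φ.2
  rw [hspec (K + L) χ, Finset.mul_sum]
  have hterm : ∀ p ∈ Finset.univ.filter
      (fun p : Sym X K × Sym X L =>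
        (p.1 : Multiset X) + (p.2 : Multiset X) = (χ : Multiset X)),
      (∏ x : X, Nat.factorial (Multiset.count x (χ : Multiset X))) *
        (Nat.multinomial Finset.univ (fun x => Multiset.count x (p.1 : Multiset X))
        * Nat.multinomial Finset.univ (fun x => Multiset.count x (p.2 : Multiset X)))
      = (Nat.factorial K * Nat.factorial L) *
        ∏ x : X, (Multiset.count x (χ : Multiset X)).choose
          (Multiset.count x (p.1 : Multiset X)) := by
    intro p hp
    have hp' := (Finset.mem_filter.1 hp).2
    have hDfac : (∏ x : X, Nat.factorial (Multiset.count x (χ : Multiset X)))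
        = (∏ x : X, (Multiset.count x (χ : Multiset X)).choose
          (Multiset.count x (p.1 : Multiset X)))
        * ((∏ x : X, Nat.factorial (Multiset.count x (p.1 : Multiset X)))
          * (∏ x : X, Nat.factorial (Multiset.count x (p.2 : Multiset X)))) := by
      rw [← Finset.prod_mul_distrib, ← Finset.prod_mul_distrib]
      refine Finset.prod_congr rfl fun x _ => ?_
      have hcx : Multiset.count x (χ : Multiset X)
          = Multiset.count x (p.1 : Multiset X) + Multiset.count x (p.2 : Multiset X) := by
        rw [← hp', Multiset.count_add]
      rw [hcx]
      have h := Nat.choose_mul_factorial_mul_factorial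
        (Nat.le_add_right (Multiset.count x (p.1 : Multiset X))
          (Multiset.count x (p.2 : Multiset X)))
      rw [Nat.add_sub_cancel_left] at h
      rw [← h]
      ring
    rw [hDfac]
    have := hspec K p.1
    have := hspec L p.2
    calc (∏ x : X, (Multiset.count x (χ : Multiset X)).choose
            (Multiset.count x (p.1 : Multiset X)))
          * ((∏ x : X, Nat.factorial (Multiset.count x (p.1 : Multiset X)))
            * (∏ x : X, Nat.factorial (Multiset.count x (p.2 : Multiset X))))
          * (Nat.multinomial Finset.univ (fun x => Multiset.count x (p.1 : Multiset X))
            * Nat.multinomial Finset.univ (fun x => Multiset.count x (p.2 : Multiset X)))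
        = ((∏ x : X, Nat.factorial (Multiset.count x (p.1 : Multiset X))) *
            Nat.multinomial Finset.univ (fun x => Multiset.count x (p.1 : Multiset X)))
          * ((∏ x : X, Nat.factorial (Multiset.count x (p.2 : Multiset X))) *
            Nat.multinomial Finset.univ (fun x => Multiset.count x (p.2 : Multiset X)))
          * ∏ x : X, (Multiset.count x (χ : Multiset X)).choose
              (Multiset.count x (p.1 : Multiset X)) := by ring
      _ = (Nat.factorial K * Nat.factorial L) *
            ∏ x : X, (Multiset.count x (χ : Multiset X)).choose
              (Multiset.count x (p.1 : Multiset X)) := by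
          rw [hspec K p.1, hspec L p.2]
  rw [Finset.sum_congr rfl hterm, ← Finset.mul_sum]
  have hbij : ∑ p ∈ Finset.univ.filter
      (fun p : Sym X K × Sym X L =>
        (p.1 : Multiset X) + (p.2 : Multiset X) = (χ : Multiset X)),
      ∏ x : X, (Multiset.count x (χ : Multiset X)).choose
        (Multiset.count x (p.1 : Multiset X))
      = ∑ φ ∈ (Multiset.powersetCard K (χ : Multiset X)).toFinset,
          ∏ x : X, ((χ : Multiset X).count x).choose (φ.count x) := by
    refine Finset.sum_bij (fun p _ => (p.1 : Multiset X)) ?_ ?_ ?_ ?_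
    · intro p hp
      have hp' := (Finset.mem_filter.1 hp).2
      rw [Multiset.mem_toFinset, Multiset.mem_powersetCard]
      refine ⟨?_, p.1.2⟩
      show (p.1 : Multiset X) ≤ (χ : Multiset X)
      rw [← hp']
      exact Multiset.le_add_right _ _
    · intro p hp q hq h
      have hp' := (Finset.mem_filter.1 hp).2
      have hq' := (Finset.mem_filter.1 hq).2
      have h1 : p.1 = q.1 := Subtype.ext h
      have h2 : p.2 = q.2 := by
        apply Subtype.ext
        have : (p.1 : Multiset X) + (p.2 : Multiset X)
            = (p.1 : Multiset X) + (q.2 : Multiset X) := by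
          rw [hp', h1]
          exact hq'.symm
        exact add_left_cancel this
      exact Prod.ext h1 h2
    · intro φ hφ
      obtain ⟨hle, hcard⟩ := Multiset.mem_powersetCard.1 (Multiset.mem_toFinset.1 hφ)
      have hχc : Multiset.card (χ : Multiset X) = K + L := χ.2
      have hcard2 : Multiset.card ((χ : Multiset X) - φ) = L := by
        rw [Multiset.card_sub hle, hχc, hcard]
        omega
      refine ⟨(⟨φ, hcard⟩, ⟨(χ : Multiset X) - φ, hcard2⟩), ?_, rfl⟩
      rw [Finset.mem_filter]
      exact ⟨Finset.mem_univ _, add_tsub_cancel_of_le hle⟩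
    · intro p hp
      rfl
  have hχc : Multiset.card (χ : Multiset X) = K + L := χ.2
  rw [hbij, vandermonde, hχc]
  have h := Nat.choose_mul_factorial_mul_factorial (Nat.le_add_right K L)
  rw [Nat.add_sub_cancel_left] at h
  rw [← h]
  ring

end MnlAux

/-- the multinomial distribution on size-K multisets over a finite type X -/
noncomputable def mnl {X : Type*} [Fintype X] [DecidableEq X] (ω : X → ℝ) {K : ℕ}
    (φ : Sym X K) : ℝ :=
  ((K.factorial / ∏ x : X, (Multiset.count x (φ : Multiset X)).factorial : ℕ) : ℝ) *
    ∏ x : X, ω x ^ Multiset.count x (φ : Multiset X)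

lemma mnl_eq {X : Type*} [Fintype X] [DecidableEq X] (ω : X → ℝ) {K : ℕ} (φ : Sym X K) :
    mnl ω φ = (Nat.multinomial Finset.univ (fun x => Multiset.count x (φ : Multiset X)) : ℝ) *
      ∏ x : X, ω x ^ Multiset.count x (φ : Multiset X) := by
  have h : (∑ x : X, Multiset.count x (φ : Multiset X)) = K := by
    rw [MnlAux.sum_count (φ : Multiset X)]; exact φ.2
  rw [mnl, Nat.multinomial, h]

theorem multinomial_convolution {X : Type*} [Fintype X] [DecidableEq X]
    (ω : X → ℝ) (hω : ∀ x, 0 ≤ ω x) (hsum : ∑ x, ω x = 1) (K L : ℕ) :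
    ∀ χ : Sym X (K + L),
      ∑ p ∈ Finset.univ.filter
          (fun p : Sym X K × Sym X L =>
            (p.1 : Multiset X) + (p.2 : Multiset X) = (χ : Multiset X)),
        mnl ω p.1 * mnl ω p.2
      = mnl ω χ := by
  intro χ
  have hterm : ∀ p ∈ Finset.univ.filter
      (fun p : Sym X K × Sym X L =>
        (p.1 : Multiset X) + (p.2 : Multiset X) = (χ : Multiset X)),
      mnl ω p.1 * mnl ω p.2
      = ((Nat.multinomial Finset.univ (fun x => Multiset.count x (p.1 : Multiset X))
          * Nat.multinomial Finset.univ (fun x => Multiset.count x (p.2 : Multiset X)) : ℕ) : ℝ)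
        * ∏ x : X, ω x ^ Multiset.count x (χ : Multiset X) := by
    intro p hp
    have hp' := (Finset.mem_filter.1 hp).2
    rw [mnl_eq, mnl_eq]
    have hω' : (∏ x : X, ω x ^ Multiset.count x (p.1 : Multiset X))
        * ∏ x : X, ω x ^ Multiset.count x (p.2 : Multiset X)
        = ∏ x : X, ω x ^ Multiset.count x (χ : Multiset X) := by
      rw [← Finset.prod_mul_distrib]
      refine Finset.prod_congr rfl fun x _ => ?_
      rw [← pow_add, ← Multiset.count_add, hp']
    push_cast
    calc (Nat.multinomial Finset.univ (fun x => Multiset.count x (p.1 : Multiset X)) : ℝ)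
          * (∏ x : X, ω x ^ Multiset.count x (p.1 : Multiset X))
          * ((Nat.multinomial Finset.univ (fun x => Multiset.count x (p.2 : Multiset X)) : ℝ)
          * ∏ x : X, ω x ^ Multiset.count x (p.2 : Multiset X))
        = (Nat.multinomial Finset.univ (fun x => Multiset.count x (p.1 : Multiset X)) : ℝ)
          * (Nat.multinomial Finset.univ (fun x => Multiset.count x (p.2 : Multiset X)) : ℝ)
          * ((∏ x : X, ω x ^ Multiset.count x (p.1 : Multiset X))
          * ∏ x : X, ω x ^ Multiset.count x (p.2 : Multiset X)) := by ring
      _ = _ := by rw [hω']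
  rw [Finset.sum_congr rfl hterm, ← Finset.sum_mul, ← Nat.cast_sum,
    MnlAux.nat_main K L χ, mnl_eq]
end

section
/- Consider the 'marginal heads' map from size-K multisets over {0,1}^N to {0,…,K}^N, sending φ to the tuple of counts (Σ_{b : b_i = 1} φ(b))_{i=1,…,N}. Then for any tuple (n_1,…,n_N) with each n_i ≤ K, the sum over all φ in the fiber of the multinomial coefficients K!/∏_b φ(b)! equals ∏_{i=1}^{N} (K choose n_i). -/
/-!
The multinomial coefficient `K! / ∏ φ(b)!` counts the `K`-tuples of points of `{0,1}^N` whose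
multiset of values is `φ`. Summing it over the fiber therefore counts the binary `K × N` matrices
whose `i`-th column has `n i` ones, and the columns can be chosen independently, in
`K.choose (n i)` ways each.
-/

open Finset Equiv MulAction

namespace Sym

open scoped Nat

variable {α : Type*} {K : ℕ}

def ofFn (f : Fin K → α) : Sym α K := ⟨univ.val.map f, by simp⟩

lemma coe_ofFn (f : Fin K → α) : (ofFn f : Multiset α) = univ.val.map f := rfl

lemma ofFn_surjective : Function.Surjective (ofFn : (Fin K → α) → Sym α K) := by
  intro s
  have hl : (s : Multiset α).toList.length = K := by simp
  refine ⟨fun k ↦ (s : Multiset α).toList.get (k.cast hl.symm), Sym.coe_injective ?_⟩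
  rw [coe_ofFn, Fin.univ_val_map, ← List.ofFn_congr hl, List.ofFn_get, Multiset.coe_toList]

lemma count_ofFn [DecidableEq α] (f : Fin K → α) (a : α) :
    (ofFn f : Multiset α).count a = #{k | f k = a} := by
  rw [coe_ofFn, Multiset.count_map]
  simp only [eq_comm (a := a)]
  rfl

lemma ofFn_eq_ofFn_iff [DecidableEq α] {f g : Fin K → α} :
    ofFn g = ofFn f ↔ ∃ σ : Perm (Fin K), f ∘ σ = g := by
  constructor
  · intro h
    have hfib (a : α) : Fintype.card {k // g k = a} = Fintype.card {k // f k = a} := by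
      simp only [Fintype.card_subtype, ← count_ofFn, h]
    exact ⟨ofFiberEquiv fun a ↦ Fintype.equivOfCardEq (hfib a), funext (ofFiberEquiv_map _)⟩
  · rintro ⟨σ, rfl⟩
    apply Sym.coe_injective
    rw [coe_ofFn, coe_ofFn, ← Multiset.map_map, Multiset.map_univ_val_equiv]

/-- Orbit–stabilizer for `Perm (Fin K)` acting on tuples by precomposition: the orbit of `f` is its
fiber under `ofFn`, and the stabilizer is `∏ a, Perm {k // f k = a}`. -/
lemma card_ofFn_fiber_mul_prod_factorial [Fintype α] [DecidableEq α] (f : Fin K → α) :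
    #{g | ofFn g = ofFn f} * ∏ a, (#{k | f k = a})! = K ! := by
  have horbit : orbit (Perm (Fin K))ᵈᵐᵃ f = ↑({g | ofFn g = ofFn f} : Finset (Fin K → α)) := by
    ext g
    simp only [mem_orbit_iff, coe_filter, mem_univ, true_and, Set.mem_ofPred_eq, ofFn_eq_ofFn_iff]
    exact DomMulAct.mk.surjective.exists.trans (by simp [funext_iff, DomMulAct.smul_apply])
  have hstab : Nat.card (stabilizer (Perm (Fin K))ᵈᵐᵃ f) = ∏ a, (#{k | f k = a})! := by
    rw [← Nat.card_congr (subtypeEquiv DomMulAct.mk fun _ ↦ DomMulAct.mem_stabilizer_iff.symm :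
        {σ : Perm (Fin K) // f ∘ σ = f} ≃ stabilizer (Perm (Fin K))ᵈᵐᵃ f),
      Nat.card_eq_fintype_card, DomMulAct.stabilizer_card]
    simp only [Fintype.card_subtype]
  rw [mul_comm, ← hstab, ← Set.ncard_coe_finset, ← horbit, ← index_stabilizer,
    Subgroup.card_mul_index, Nat.card_congr DomMulAct.mk.symm, Nat.card_perm,
    Nat.card_eq_fintype_card, Fintype.card_fin]

lemma card_ofFn_fiber [Fintype α] [DecidableEq α] (s : Sym α K) :
    #{f | ofFn f = s} = K ! / ∏ a, ((s : Multiset α).count a)! := by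
  obtain ⟨f, rfl⟩ := ofFn_surjective s
  simp only [count_ofFn]
  rw [← card_ofFn_fiber_mul_prod_factorial f, Nat.mul_div_cancel _ (by positivity)]

lemma sum_count_ofFn [DecidableEq α] (f : Fin K → α) (t : Finset α) :
    ∑ a ∈ t, (ofFn f : Multiset α).count a = #{k | f k ∈ t} := by
  simp only [count_ofFn]
  exact sum_card_fiberwise_eq_card_filter univ t f

end Sym

lemma card_filter_forall_swap {κ ι β : Type*} [Fintype κ] [DecidableEq κ] [Fintype ι]
    [DecidableEq ι] [Fintype β]
    (p : ι → (κ → β) → Prop) [∀ i, DecidablePred (p i)] :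
    #{f : κ → ι → β | ∀ i, p i (fun k ↦ f k i)} = ∏ i, #{h | p i h} := by
  rw [← Fintype.card_piFinset]
  exact card_equiv (piComm _) (by simp [Fintype.mem_piFinset, piComm])

lemma card_filter_card_filter_eq_one {κ : Type*} [Fintype κ] [DecidableEq κ] (c : ℕ) :
    #{h : κ → Fin 2 | #{k | h k = 1} = c} = (Fintype.card κ).choose c := by
  rw [← card_univ, ← card_powersetCard]
  refine card_nbij' (fun h ↦ ({k | h k = 1} : Finset κ)) (fun s k ↦ if k ∈ s then 1 else 0)
    ?_ ?_ ?_ ?_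
  · intro h hh
    simpa using hh
  · intro s hs
    simpa using hs
  · intro h _
    funext k
    simp only [mem_filter, mem_univ, true_and]
    generalize h k = x
    fin_cases x <;> rfl
  · intro s _
    ext k
    simp

theorem marginal_heads_coefficient_multivariate_general (N K : ℕ) (n : Fin N → ℕ) :
    ∑ φ ∈ Finset.univ.filter (fun φ : Sym (Fin N → Fin 2) K =>
        ∀ i : Fin N,
          (∑ b ∈ Finset.univ.filter (fun b : Fin N → Fin 2 => b i = 1),
            Multiset.count b (φ : Multiset (Fin N → Fin 2))) = n i),
      K.factorial /
        ∏ b : Fin N → Fin 2, (Multiset.count b (φ : Multiset (Fin N → Fin 2))).factorial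
      = ∏ i : Fin N, K.choose (n i) := by
  calc _ = #{f : Fin K → Fin N → Fin 2 | ∀ i, #{k | f k i = 1} = n i} := by
        simp only [← Sym.card_ofFn_fiber, sum_card_fiberwise_eq_card_filter, mem_filter,
          mem_univ, true_and, Sym.sum_count_ofFn]
    _ = ∏ i, #{h : Fin K → Fin 2 | #{k | h k = 1} = n i} := by
        convert card_filter_forall_swap fun i (h : Fin K → Fin 2) ↦ #{k | h k = 1} = n i
    _ = ∏ i : Fin N, K.choose (n i) := by
        simp only [card_filter_card_filter_eq_one, Fintype.card_fin]

theorem marginal_heads_coefficient_multivariate (N K : ℕ) (n : Fin N → ℕ)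
    (hn : ∀ i, n i ≤ K) :
    ∑ φ ∈ Finset.univ.filter (fun φ : Sym (Fin N → Fin 2) K =>
        ∀ i : Fin N,
          (∑ b ∈ Finset.univ.filter (fun b : Fin N → Fin 2 => b i = 1),
            Multiset.count b (φ : Multiset (Fin N → Fin 2))) = n i),
      K.factorial /
        ∏ b : Fin N → Fin 2, (Multiset.count b (φ : Multiset (Fin N → Fin 2))).factorial
      = ∏ i : Fin N, K.choose (n i) :=
  marginal_heads_coefficient_multivariate_general N K n
end
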